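/- (Proposition 1: derivation of traces for paths in the graph.) Let reach be the least relation on V × (Σ ∪ N)* × V closed under: (i) reach(x, ε, x) for every vertex x; (ii) reach(x, p, y) whenever p ∈ Σ and (x, p, y) ∈ D; (iii) reach(x, A, y) whenever A ∈ N, (A → α) ∈ P, and reach(x, α, y); (iv) reach(x, α₁α₂, y) whenever there is a vertex w with reach(x, α₁, w) and reach(w, α₂, y). Then for all vertices x, y and every string α over Σ ∪ N: reach(x, α, y) holds if and only if there exists a terminal string s ∈ Σ* with α ⇒* s and s ∈ traces(paths(x, y)). -/

import Mathlib

/-- `HasTrace D x s y` : `s` is the trace of some path in the data graph `D` from `x` to `y`. -/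
inductive HasTrace {V E : Type*} (D : Set (V × E × V)) : V → List E → V → Prop
  | nil (x : V) : HasTrace D x [] x
  | cons {x y z : V} {p : E} {s : List E} :
      (x, p, y) ∈ D → HasTrace D y s z → HasTrace D x (p :: s) z


/-- The least relation `reach` of Proposition 1. -/
inductive Reach {T V : Type*} (g : ContextFreeGrammar T) (D : Set (V × T × V)) :
    V → List (Symbol T g.NT) → V → Prop
  | eps (x : V) : Reach g D x [] x
  | term {x y : V} {p : T} : (x, p, y) ∈ D → Reach g D x [Symbol.terminal p] y
  | nonterm {x y : V} {r : ContextFreeRule T g.NT} :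
      r ∈ g.rules → Reach g D x r.output y → Reach g D x [Symbol.nonterminal r.input] y
  | concat {x w y : V} {α₁ α₂ : List (Symbol T g.NT)} :
      Reach g D x α₁ w → Reach g D w α₂ y → Reach g D x (α₁ ++ α₂) y

/-! Every `Reach` derivation builds, rule by rule, a grammar derivation together with a path
spelling out the derived terminal string. Conversely, `Reach` holds for the terminal strings
traced by paths, and it is preserved by undoing a derivation step: a `Reach` fact about a
concatenation splits at an intermediate vertex, so the rewritten factor can be isolated and
folded back into its nonterminal. -/

namespace HasTrace

variable {V E : Type*} {D : Set (V × E × V)}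

theorem append {x y z : V} {s t : List E} (hs : HasTrace D x s y) (ht : HasTrace D y t z) :
    HasTrace D x (s ++ t) z := by
  induction hs with
  | nil => exact ht
  | cons he _ ih => exact .cons he (ih ht)

end HasTrace

namespace Reach

variable {T V : Type*} {g : ContextFreeGrammar T} {D : Set (V × T × V)}

theorem exists_split_singleton {x y : V} {a : Symbol T g.NT} {α₁ α₂ : List (Symbol T g.NT)}
    (h : Reach g D x [a] y) (hα : [a] = α₁ ++ α₂) :
    ∃ w, Reach g D x α₁ w ∧ Reach g D w α₂ y := by
  rcases List.append_eq_singleton_iff.mp hα.symm with ⟨rfl, rfl⟩ | ⟨rfl, rfl⟩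
  exacts [⟨x, .eps x, h⟩, ⟨y, h, .eps y⟩]

theorem exists_split {x y : V} {α : List (Symbol T g.NT)} (h : Reach g D x α y) :
    ∀ {α₁ α₂}, α = α₁ ++ α₂ → ∃ w, Reach g D x α₁ w ∧ Reach g D w α₂ y := by
  induction h with
  | eps x =>
    intro α₁ α₂ hα
    obtain ⟨rfl, rfl⟩ := List.append_eq_nil_iff.mp hα.symm
    exact ⟨x, .eps x, .eps x⟩
  | term hD => exact exists_split_singleton (.term hD)
  | nonterm hr hout => exact exists_split_singleton (.nonterm hr hout)
  | concat h₁ h₂ ih₁ ih₂ =>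
    intro α₁ α₂ hα
    rcases List.append_eq_append_iff.mp hα.symm with ⟨γ, rfl, rfl⟩ | ⟨γ, rfl, rfl⟩
    · obtain ⟨w, hw₁, hw₂⟩ := ih₁ rfl
      exact ⟨w, hw₁, .concat hw₂ h₂⟩
    · obtain ⟨w, hw₁, hw₂⟩ := ih₂ rfl
      exact ⟨w, .concat h₁ hw₁, hw₂⟩

theorem append_iff {x y : V} {α₁ α₂ : List (Symbol T g.NT)} :
    Reach g D x (α₁ ++ α₂) y ↔ ∃ w, Reach g D x α₁ w ∧ Reach g D w α₂ y :=
  ⟨fun h => h.exists_split rfl, fun ⟨_, h₁, h₂⟩ => .concat h₁ h₂⟩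

theorem exists_derives_hasTrace {x y : V} {α : List (Symbol T g.NT)} (h : Reach g D x α y) :
    ∃ s : List T, g.Derives α (s.map Symbol.terminal) ∧ HasTrace D x s y := by
  induction h with
  | eps x => exact ⟨[], .refl _, .nil x⟩
  | term hD => exact ⟨[_], .refl _, .cons hD (.nil _)⟩
  | nonterm hr _ ih =>
    obtain ⟨s, hd, ht⟩ := ih
    exact ⟨s, (ContextFreeGrammar.Produces.single ⟨_, hr, .input_output⟩).trans hd, ht⟩
  | concat _ _ ih₁ ih₂ =>
    obtain ⟨s₁, hd₁, ht₁⟩ := ih₁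
    obtain ⟨s₂, hd₂, ht₂⟩ := ih₂
    refine ⟨s₁ ++ s₂, ?_, ht₁.append ht₂⟩
    rw [List.map_append]
    exact (hd₁.append_right _).trans (hd₂.append_left _)

theorem of_hasTrace {x y : V} {s : List T} (h : HasTrace D x s y) :
    Reach g D x (s.map Symbol.terminal) y := by
  induction h with
  | nil => exact .eps _
  | cons hD _ ih => exact .concat (α₁ := [_]) (.term hD) ih

theorem of_produces {x y : V} {α β : List (Symbol T g.NT)} (hp : g.Produces α β)
    (h : Reach g D x β y) : Reach g D x α y := by
  obtain ⟨r, hr, hrw⟩ := hp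
  obtain ⟨p, q, rfl, rfl⟩ := hrw.exists_parts
  obtain ⟨u, hu, hq⟩ := append_iff.mp h
  obtain ⟨v, hp, hout⟩ := append_iff.mp hu
  exact .concat (.concat hp (.nonterm hr hout)) hq

theorem of_derives {x y : V} {α β : List (Symbol T g.NT)} (hd : g.Derives α β)
    (h : Reach g D x β y) : Reach g D x α y := by
  induction hd using Relation.ReflTransGen.head_induction_on with
  | refl => exact h
  | head hp _ ih => exact ih.of_produces hp

end Reach

theorem reach_iff {T V : Type*} (g : ContextFreeGrammar T) (D : Set (V × T × V)) :
    ∀ (x y : V) (α : List (Symbol T g.NT)),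
      Reach g D x α y ↔
        ∃ s : List T, g.Derives α (s.map Symbol.terminal) ∧ HasTrace D x s y :=
  fun _ _ _ =>
    ⟨Reach.exists_derives_hasTrace, fun ⟨_, hd, ht⟩ => (Reach.of_hasTrace ht).of_derives hd⟩
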